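/- Suppose V is nonempty, Γ is connected, no edge e ∈ E has exactly one v ∈ V with γ e v ≠ 0 (no leaves), and every cycle in Γ is balanced (i.e. Γ is in equilibrium). Then ker(γ) ≠ {0}; moreover there exists d ∈ ker(γ) with d v ≠ 0 for every v ∈ V. -/

import Mathlib

/-- The defining property of the incidence matrix of a multiquiver: every row has
at most one positive and at most one negative entry. -/
def CondM {V E : Type*} (γ : E → V → ℤ) : Prop :=
  ∀ e : E, (∀ v w : V, 0 < γ e v → 0 < γ e w → v = w) ∧
    (∀ v w : V, γ e v < 0 → γ e w < 0 → v = w)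

/-- Two vertices are adjacent if they are distinct and some edge is incident to
both of them. -/
def MQAdj {V E : Type*} (γ : E → V → ℤ) (v w : V) : Prop :=
  v ≠ w ∧ ∃ e : E, γ e v ≠ 0 ∧ γ e w ≠ 0

/-- The multiquiver is connected if any two vertices are related by the
reflexive–transitive closure of adjacency. -/
def MQConnected {V E : Type*} (γ : E → V → ℤ) : Prop :=
  ∀ v w : V, Relation.ReflTransGen (MQAdj γ) v w

/-- The kernel of the incidence matrix `γ`, as a `ℚ`-subspace of `V → ℚ`:
`{d | ∀ e, Σ_v γ e v · d v = 0}`. -/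
def kerGamma {V E : Type*} [Fintype V] (γ : E → V → ℤ) : Submodule ℚ (V → ℚ) where
  carrier := {d | ∀ e : E, ∑ v : V, (γ e v : ℚ) * d v = 0}
  add_mem' := by
    intro a b ha hb e
    have : ∑ v : V, (γ e v : ℚ) * (a v + b v)
        = (∑ v : V, (γ e v : ℚ) * a v) + ∑ v : V, (γ e v : ℚ) * b v := by
      rw [← Finset.sum_add_distrib]
      exact Finset.sum_congr rfl fun v _ => by ring
    simpa [this] using by rw [ha e, hb e, add_zero]
  zero_mem' := by intro e; simp
  smul_mem' := by
    intro c a ha e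
    have : ∑ v : V, (γ e v : ℚ) * (c * a v) = c * ∑ v : V, (γ e v : ℚ) * a v := by
      rw [Finset.mul_sum]
      exact Finset.sum_congr rfl fun v _ => by ring
    simp only [Pi.smul_apply, smul_eq_mul]
    rw [this, ha e, mul_zero]

/-- A (not necessarily directed) cycle in the multiquiver with incidence matrix
`γ`: `n ≥ 2` distinct vertices `v i` and distinct edges `e i`, with `e i`
incident to `v i` and `v (i+1)` (indices mod `n`). -/
structure MQCycle {V E : Type*} (γ : E → V → ℤ) where
  n : ℕ
  hn : 2 ≤ n
  v : ZMod n → V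
  e : ZMod n → E
  hv : Function.Injective v
  he : Function.Injective e
  h1 : ∀ i, γ (e i) (v i) ≠ 0
  h2 : ∀ i, γ (e i) (v (i + 1)) ≠ 0

/-- A cycle is balanced if the product of the multiplicities at its sources
equals the product of the multiplicities at its targets. -/
def MQCycle.Balanced {V E : Type*} {γ : E → V → ℤ} (c : MQCycle γ) : Prop :=
  haveI : NeZero c.n := ⟨by have := c.hn; omega⟩
  ∏ i : ZMod c.n, (γ (c.e i) (c.v i)).natAbs = ∏ i : ZMod c.n, (γ (c.e i) (c.v (i + 1))).natAbs

/-- The setoid on vertices whose classes are the connected components. -/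
def mqSetoid {V E : Type*} (γ : E → V → ℤ) : Setoid V :=
  ⟨Relation.EqvGen (MQAdj γ), Relation.EqvGen.is_equivalence _⟩

/-- The edge `e` is a leaf at the component `C`: exactly one vertex is incident
to `e`, and that vertex lies in `C`. -/
def LeafAt {V E : Type*} (γ : E → V → ℤ) (C : Quotient (mqSetoid γ)) (e : E) : Prop :=
  (∃! v : V, γ e v ≠ 0) ∧ ∀ v : V, γ e v ≠ 0 → Quotient.mk (mqSetoid γ) v = C

/-- A connected component is in equilibrium if no edge is a leaf at it and every
cycle all of whose vertices lie in it is balanced. -/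
def InEquilibrium {V E : Type*} (γ : E → V → ℤ) (C : Quotient (mqSetoid γ)) : Prop :=
  (∀ e : E, ¬ LeafAt γ C e) ∧
    ∀ c : MQCycle γ, (∀ i, Quotient.mk (mqSetoid γ) (c.v i) = C) → c.Balanced

/-!
Join two vertices when some edge meets both, and weight the step `v → w` by `|γ e v| / |γ e w|`
for such an edge `e`. Balanced 2-cycles make this independent of `e`, and since every closed walk
decomposes into cycles and steps there and back, the weights multiply to `1` around every closed
walk. On the connected graph they therefore integrate to a nowhere-zero potential `d` with
`|γ e v| d v = |γ e w| d w` across every edge. The two nonzero entries of a row of `γ` have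
opposite signs and, there being no leaves, every row with a nonzero entry has exactly two, so
`d ∈ ker γ`.
-/
namespace SimpleGraph.Walk

variable {V α : Type*} [CommMonoid α] {G : SimpleGraph V} {u v w : V}

def prodDarts (f : V → V → α) (p : G.Walk u v) : α :=
  (p.darts.map fun d => f d.fst d.snd).prod

variable (f : V → V → α)

@[simp] lemma prodDarts_nil : (nil : G.Walk u u).prodDarts f = 1 := rfl

@[simp] lemma prodDarts_cons (h : G.Adj u v) (p : G.Walk v w) :
    (cons h p).prodDarts f = f u v * p.prodDarts f := rfl

@[simp] lemma prodDarts_append (p : G.Walk u v) (q : G.Walk v w) :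
    (p.append q).prodDarts f = p.prodDarts f * q.prodDarts f := by
  simp [prodDarts, darts_append]

lemma prodDarts_eq_prod_range_getVert (p : G.Walk u v) :
    p.prodDarts f = ∏ k ∈ Finset.range p.length, f (p.getVert k) (p.getVert (k + 1)) := by
  induction p with
  | nil => rfl
  | cons h p ih =>
    rw [prodDarts_cons, ih, length_cons, Finset.prod_range_succ']
    simp [getVert_cons_succ, mul_comm]

lemma getVert_val_natCast (c : G.Walk u u) {k : ℕ} (hk : k ≤ c.length) :
    c.getVert (k : ZMod c.length).val = c.getVert k := by
  rcases hk.lt_or_eq with hk | rfl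
  · rw [ZMod.val_cast_of_lt hk]
  · rw [ZMod.natCast_self, ZMod.val_zero, getVert_zero, getVert_length]

lemma getVert_val_add_one (c : G.Walk u u) [NeZero c.length] (i : ZMod c.length) :
    c.getVert (i + 1).val = c.getVert (i.val + 1) := by
  conv_lhs => rw [← ZMod.natCast_zmod_val i, ← Nat.cast_succ]
  exact c.getVert_val_natCast (ZMod.val_lt i)

lemma prodDarts_eq_prod_zmod (c : G.Walk u u) [NeZero c.length] :
    c.prodDarts f = ∏ i : ZMod c.length, f (c.getVert i.val) (c.getVert (i + 1).val) := by
  rw [prodDarts_eq_prod_range_getVert]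
  refine Finset.prod_nbij' Nat.cast ZMod.val (by simp) (by simp [ZMod.val_lt])
    (fun k hk => ZMod.val_cast_of_lt (Finset.mem_range.1 hk)) (by simp) fun k hk => ?_
  rw [getVert_val_add_one, ZMod.val_cast_of_lt (Finset.mem_range.1 hk)]

lemma exists_eq_append_append_of_not_isPath {p : G.Walk u v} (hp : ¬p.IsPath) :
    ∃ (x : V) (q : G.Walk u x) (c : G.Walk x x) (r : G.Walk x v),
      ¬c.Nil ∧ p = q.append (c.append r) := by
  classical
  induction p with
  | nil => exact absurd IsPath.nil hp
  | @cons u v w h p ih =>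
    by_cases hu : u ∈ p.support
    · exact ⟨u, nil, cons h (p.takeUntil u hu), p.dropUntil u hu, not_nil_cons,
        by simp [take_spec]⟩
    · rw [cons_isPath_iff] at hp
      obtain ⟨x, q, c, r, hc, rfl⟩ := ih fun hp' => hp ⟨hp', hu⟩
      exact ⟨x, cons h q, c, r, hc, rfl⟩

theorem prodDarts_eq_one_of_forall_isCycle (hswap : ∀ v w, G.Adj v w → f v w * f w v = 1)
    (hcycle : ∀ v (c : G.Walk v v), c.IsCycle → c.prodDarts f = 1) (c : G.Walk u u) :
    c.prodDarts f = 1 := by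
  induction hn : c.length using Nat.strong_induction_on generalizing u with
  | _ n ih =>
  cases c with
  | nil => rfl
  | @cons _ v _ h p =>
    -- a closed walk is a cycle, a step there and back, or splits into two shorter closed walks
    by_cases hp : p.IsPath
    · by_cases h3 : 3 ≤ (cons h p).length
      · exact hcycle _ _ (isCycle_iff_isPath_tail_and_le_length.2 ⟨by simpa using hp, h3⟩)
      · cases p with
        | nil => exact absurd h (G.loopless.irrefl _)
        | cons h' p' =>
          cases p' with
          | nil => simp [hswap _ _ h]
          | cons => simp at h3
    · obtain ⟨x, q, c, r, hc, rfl⟩ := exists_eq_append_append_of_not_isPath hp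
      have hc0 := not_nil_iff_lt_length.1 hc
      simp only [length_cons, length_append] at hn
      have h1 := ih c.length (by omega) c rfl
      have h2 := ih (cons h (q.append r)).length (by simp only [length_cons, length_append]; omega)
        (cons h (q.append r)) rfl
      simp only [prodDarts_cons, prodDarts_append] at h2 ⊢
      rw [h1, one_mul, h2]

end SimpleGraph.Walk

namespace SimpleGraph

variable {V α : Type*} [CommMonoid α] {G : SimpleGraph V}

theorem Connected.exists_forall_adj_eq_mul (hG : G.Connected) (f : V → V → α)
    (hswap : ∀ v w, G.Adj v w → f v w * f w v = 1)
    (hcycle : ∀ v (c : G.Walk v v), c.IsCycle → c.prodDarts f = 1) :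
    ∃ d : V → α, ∀ v w, G.Adj v w → d w = d v * f v w := by
  obtain ⟨r⟩ := hG.nonempty
  refine ⟨fun v => (hG r v).some.prodDarts f, fun v w h => ?_⟩
  set pv := (hG r v).some
  set pw := (hG r w).some
  have hloop := Walk.prodDarts_eq_one_of_forall_isCycle f hswap hcycle
    (pv.append (.cons h pw.reverse))
  have hback := Walk.prodDarts_eq_one_of_forall_isCycle f hswap hcycle (pw.append pw.reverse)
  simp only [Walk.prodDarts_append, Walk.prodDarts_cons] at hloop hback
  calc pw.prodDarts f
      = pw.prodDarts f * (pv.prodDarts f * (f v w * pw.reverse.prodDarts f)) := by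
        rw [hloop, mul_one]
    _ = pv.prodDarts f * f v w * (pw.prodDarts f * pw.reverse.prodDarts f) := by ac_rfl
    _ = pv.prodDarts f * f v w := by rw [hback, mul_one]

end SimpleGraph

lemma mul_add_mul_eq_zero_of_natAbs_mul_eq {K : Type*} [CommRing K] [LinearOrder K]
    [IsStrictOrderedRing K] {a b : ℤ} {x y : K} (hab : a * b < 0)
    (h : a.natAbs * x = b.natAbs * y) : a * x + b * y = 0 := by
  rw [Nat.cast_natAbs, Nat.cast_natAbs] at h
  rcases lt_or_gt_of_ne (left_ne_zero_of_mul hab.ne) with ha | ha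
  · rw [abs_of_neg ha, abs_of_pos (pos_of_mul_neg_right hab ha.le)] at h
    push_cast at h
    linarith
  · rw [abs_of_pos ha, abs_of_neg (neg_of_mul_neg_right hab ha.le)] at h
    push_cast at h
    linarith

section Multiquiver

variable {V E : Type*} {γ : E → V → ℤ}

lemma CondM.mul_neg (hM : CondM γ) {e : E} {v w : V} (hv : γ e v ≠ 0) (hw : γ e w ≠ 0)
    (hvw : v ≠ w) : γ e v * γ e w < 0 := by
  rcases hv.lt_or_gt with hv | hv <;> rcases hw.lt_or_gt with hw | hw
  · exact absurd ((hM e).2 v w hv hw) hvw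
  · exact mul_neg_of_neg_of_pos hv hw
  · exact mul_neg_of_pos_of_neg hv hw
  · exact absurd ((hM e).1 v w hv hw) hvw

lemma CondM.eq_or_eq_or_eq (hM : CondM γ) {e : E} {a b c : V} (ha : γ e a ≠ 0)
    (hb : γ e b ≠ 0) (hc : γ e c ≠ 0) : a = b ∨ a = c ∨ b = c := by
  by_contra! h
  have hab := hM.mul_neg ha hb h.1
  have hac := hM.mul_neg ha hc h.2.1
  have hbc := hM.mul_neg hb hc h.2.2
  nlinarith [mul_pos_of_neg_of_neg hab hac, sq_nonneg (γ e a)]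

lemma CondM.injective_edges (hM : CondM γ) {n : ℕ} (hn : 3 ≤ n) {v : ZMod n → V}
    {e : ZMod n → E} (hv : Function.Injective v) (h1 : ∀ i, γ (e i) (v i) ≠ 0)
    (h2 : ∀ i, γ (e i) (v (i + 1)) ≠ 0) : Function.Injective e := by
  have hcast (k : ℕ) (hk0 : 0 < k) (hk : k < 3) : (k : ZMod n) ≠ 0 := fun h =>
    absurd (Nat.le_of_dvd hk0 ((ZMod.natCast_eq_zero_iff k n).1 h)) (by omega)
  have hone : (1 : ZMod n) ≠ 0 := by exact_mod_cast hcast 1 (by norm_num) (by norm_num)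
  have htwo : (2 : ZMod n) ≠ 0 := by exact_mod_cast hcast 2 (by norm_num) (by norm_num)
  -- a repeated edge would meet three distinct vertices of the cycle
  intro i j hij
  by_contra hne
  by_cases hj : j = i + 1
  · subst hj
    have h3 : γ (e i) (v (i + 1 + 1)) ≠ 0 := hij ▸ h2 (i + 1)
    rcases hM.eq_or_eq_or_eq (h1 i) (h2 i) h3 with h | h | h <;> have := hv h
    · exact hone (by linear_combination -this)
    · exact htwo (by linear_combination -this)
    · exact hone (by linear_combination -this)
  · have h3 : γ (e i) (v j) ≠ 0 := hij ▸ h1 j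
    rcases hM.eq_or_eq_or_eq (h1 i) (h2 i) h3 with h | h | h <;> have := hv h
    · exact hone (by linear_combination -this)
    · exact hne this
    · exact hj this.symm

lemma natAbs_mul_natAbs_eq_of_forall_balanced (hbal : ∀ c : MQCycle γ, c.Balanced)
    {e e' : E} {v w : V} (hvw : v ≠ w) (hev : γ e v ≠ 0) (hew : γ e w ≠ 0)
    (he'v : γ e' v ≠ 0) (he'w : γ e' w ≠ 0) :
    (γ e v).natAbs * (γ e' w).natAbs = (γ e w).natAbs * (γ e' v).natAbs := by
  by_cases hee' : e = e'
  · rw [hee', mul_comm]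
  have hbal2 := hbal ⟨2, le_rfl, ![v, w], ![e, e'],
    by intro i j; fin_cases i <;> fin_cases j <;> simp [hvw, hvw.symm] <;> rfl,
    by intro i j; fin_cases i <;> fin_cases j <;> simp [hee', Ne.symm hee'] <;> rfl,
    by intro i; fin_cases i <;> assumption,
    by intro i; fin_cases i <;> assumption⟩
  have huniv : (Finset.univ : Finset (ZMod 2)) = {0, 1} := rfl
  have h11 : (1 + 1 : ZMod 2) = 0 := rfl
  simp only [MQCycle.Balanced, huniv, Finset.prod_pair zero_ne_one, h11, zero_add] at hbal2
  simpa using hbal2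

def mqGraph (γ : E → V → ℤ) : SimpleGraph V where
  Adj := MQAdj γ
  symm := ⟨fun _ _ ⟨hne, e, hv, hw⟩ => ⟨hne.symm, e, hw, hv⟩⟩
  loopless := ⟨fun _ h => h.1 rfl⟩

lemma MQConnected.connected_mqGraph [Nonempty V] (h : MQConnected γ) :
    (mqGraph γ).Connected :=
  (SimpleGraph.connected_iff _).2
    ⟨fun v w => (SimpleGraph.reachable_iff_reflTransGen v w).2 (h v w), ‹_›⟩

open Classical in
/-- When all cycles are balanced, the choice of the edge does not matter (`edgeWeight_eq`). -/
noncomputable def edgeWeight (γ : E → V → ℤ) (v w : V) : ℚˣ :=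
  if h : ∃ e, γ e v ≠ 0 ∧ γ e w ≠ 0 then
    Units.mk0 ((γ h.choose v).natAbs / (γ h.choose w).natAbs)
      (by simp [h.choose_spec.1, h.choose_spec.2])
  else 1

lemma edgeWeight_eq (hbal : ∀ c : MQCycle γ, c.Balanced) {e : E} {v w : V} (hvw : v ≠ w)
    (hv : γ e v ≠ 0) (hw : γ e w ≠ 0) :
    (edgeWeight γ v w : ℚ) = (γ e v).natAbs / (γ e w).natAbs := by
  have h : ∃ e, γ e v ≠ 0 ∧ γ e w ≠ 0 := ⟨e, hv, hw⟩
  rw [edgeWeight, dif_pos h, Units.val_mk0,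
    div_eq_div_iff (by simp [h.choose_spec.2]) (by simp [hw]), mul_comm ((γ e v).natAbs : ℚ)]
  exact_mod_cast
    natAbs_mul_natAbs_eq_of_forall_balanced hbal hvw h.choose_spec.1 h.choose_spec.2 hv hw

lemma edgeWeight_mul_edgeWeight (hbal : ∀ c : MQCycle γ, c.Balanced) {v w : V}
    (h : MQAdj γ v w) : edgeWeight γ v w * edgeWeight γ w v = 1 := by
  obtain ⟨hvw, e, hv, hw⟩ := h
  ext
  rw [Units.val_mul, edgeWeight_eq hbal hvw hv hw, edgeWeight_eq hbal hvw.symm hw hv,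
    Units.val_one]
  field_simp [hv, hw]

lemma prodDarts_edgeWeight_eq_one_of_isCycle (hM : CondM γ)
    (hbal : ∀ c : MQCycle γ, c.Balanced) {u : V} (c : (mqGraph γ).Walk u u) (hc : c.IsCycle) :
    c.prodDarts (edgeWeight γ) = 1 := by
  have h3 := hc.three_le_length
  have : NeZero c.length := ⟨by omega⟩
  have hadj (i : ZMod c.length) : MQAdj γ (c.getVert i.val) (c.getVert (i + 1).val) := by
    rw [c.getVert_val_add_one]
    exact c.adj_getVert_succ (ZMod.val_lt i)
  choose e he using fun i => (hadj i).2
  have hv : Function.Injective fun i : ZMod c.length => c.getVert i.val := fun i j h =>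
    ZMod.val_injective _ <| hc.getVert_injOn' (Nat.le_sub_one_of_lt (ZMod.val_lt i))
      (Nat.le_sub_one_of_lt (ZMod.val_lt j)) h
  have hbalc := hbal ⟨c.length, by omega, _, e, hv,
    hM.injective_edges h3 hv (fun i => (he i).1) (fun i => (he i).2),
    fun i => (he i).1, fun i => (he i).2⟩
  simp only [MQCycle.Balanced] at hbalc
  ext
  rw [c.prodDarts_eq_prod_zmod, Units.coe_prod, Units.val_one,
    Finset.prod_congr rfl fun i _ => edgeWeight_eq hbal (hadj i).1 (he i).1 (he i).2,
    Finset.prod_div_distrib, ← Nat.cast_prod, ← Nat.cast_prod, hbalc]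
  refine div_self (Nat.cast_ne_zero.2 (Finset.prod_ne_zero_iff.2 fun i _ => ?_))
  exact Int.natAbs_ne_zero.2 (he i).2

lemma mem_kerGamma_of_natAbs_mul_eq [Fintype V] (hM : CondM γ)
    (hnoleaf : ∀ e : E, ¬∃! v : V, γ e v ≠ 0) {d : V → ℚ}
    (hd : ∀ e v w, v ≠ w → γ e v ≠ 0 → γ e w ≠ 0 →
      (γ e v).natAbs * d v = (γ e w).natAbs * d w) :
    d ∈ kerGamma γ := by
  intro e
  by_cases he : ∃ v, γ e v ≠ 0
  swap
  · push Not at he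
    simp [he]
  obtain ⟨v, hv⟩ := he
  obtain ⟨w, hw, hwv⟩ : ∃ w, γ e w ≠ 0 ∧ w ≠ v := by
    by_contra! h
    exact hnoleaf e ⟨v, hv, h⟩
  rw [Fintype.sum_eq_add v w hwv.symm fun x hx => ?_]
  · exact mul_add_mul_eq_zero_of_natAbs_mul_eq (hM.mul_neg hv hw hwv.symm)
      (hd e v w hwv.symm hv hw)
  · suffices γ e x = 0 by simp [this]
    by_contra hx0
    rcases hM.eq_or_eq_or_eq hv hw hx0 with h | h | h
    · exact hwv h.symm
    · exact hx.1 h.symm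
    · exact hx.2 h.symm

end Multiquiver

theorem kerGamma_ne_bot_of_equilibrium_general {V E : Type*} [Fintype V]
    [Nonempty V]
    (γ : E → V → ℤ) (hM : CondM γ) (hconn : MQConnected γ)
    (hnoleaf : ∀ e : E, ¬ ∃! v : V, γ e v ≠ 0)
    (hbal : ∀ c : MQCycle γ, c.Balanced) :
    kerGamma γ ≠ ⊥ ∧ ∃ d ∈ kerGamma γ, ∀ v : V, d v ≠ 0 := by
  obtain ⟨d, hd⟩ := hconn.connected_mqGraph.exists_forall_adj_eq_mul (edgeWeight γ)
    (fun _ _ => edgeWeight_mul_edgeWeight hbal)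
    (fun _ c hc => prodDarts_edgeWeight_eq_one_of_isCycle hM hbal c hc)
  have hker : (fun v => (d v : ℚ)) ∈ kerGamma γ := by
    refine mem_kerGamma_of_natAbs_mul_eq hM hnoleaf fun e v w hvw hv hw => ?_
    rw [hd v w ⟨hvw, e, hv, hw⟩, Units.val_mul, edgeWeight_eq hbal hvw hv hw]
    field_simp
  refine ⟨(Submodule.ne_bot_iff _).2 ⟨_, hker, fun h0 => ?_⟩, _, hker,
    fun v => (d v).ne_zero⟩
  obtain ⟨v⟩ := ‹Nonempty V›
  exact (d v).ne_zero (congrFun h0 v)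

/-- If `V` is nonempty and `Γ` is connected, has no leaves, and all of its cycles
are balanced (`Γ` is in equilibrium), then `ker γ ≠ {0}`; moreover some element
of `ker γ` is nonzero at every vertex. -/
theorem kerGamma_ne_bot_of_equilibrium {V E : Type*} [Fintype V] [Fintype E]
    [Nonempty V]
    (γ : E → V → ℤ) (hM : CondM γ) (hconn : MQConnected γ)
    (hnoleaf : ∀ e : E, ¬ ∃! v : V, γ e v ≠ 0)
    (hbal : ∀ c : MQCycle γ, c.Balanced) :
    kerGamma γ ≠ ⊥ ∧ ∃ d ∈ kerGamma γ, ∀ v : V, d v ≠ 0 :=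
  kerGamma_ne_bot_of_equilibrium_general γ hM hconn hnoleaf hbal
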